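/- arXiv:1701.00546 — 2 statements merged into one kernel-verified Lean document; each statement's English description precedes it below -/
import Mathlib

section
/- Let G be a finite undirected simple graph, let u and v be distinct non-adjacent vertices with k_G(u) < k_G(v), and let G' = G + (u,v) be the graph obtained by inserting the edge (u,v). If w is any vertex whose coreness changes after the insertion, i.e., k_{G'}(w) ≠ k_G(w), then w is k-reachable from u in the original graph G with k = k_G(u): there is a path from u to w in G all of whose vertices (including u and w) have G-coreness equal to k_G(u). -/
/-!
Coreness can only grow when an edge is added, and by at most one. Let `m = k_{G'}(w) > k_G(w)`
and let `C` be a vertex set containing `w` of minimum `G'`-degree `m`; every vertex of `C` has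
`G`-coreness at least `m - 1`. Let `S` be the set of vertices reachable from `w` inside `C`
through vertices of `G`-coreness below `m`. If `u ∉ S`, then the vertices of `S` keep their
`G'`-degree into `C` in `G` and their neighbours in `C` lie in `S` or in the `m`-core of `G`,
so `S` together with the `m`-core of `G` has minimum degree `m` in `G`, which contradicts
`k_G(w) < m`. Hence `u ∈ S`, so `m = k_G(u) + 1` and the walk from `w` to `u` stays at
coreness `k_G(u)`.
-/

/-- Degree of `u` in the subgraph of `G` induced by the vertex set `C`. -/
noncomputable def degOn {V : Type*} (G : SimpleGraph V) (C : Set V) (u : V) : ℕ :=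
  {v ∈ C | G.Adj u v}.ncard

/-- The coreness of a vertex `u`: the largest `k` such that `u` belongs to some set `C`
all of whose vertices have degree at least `k` in the subgraph induced by `C`. -/
noncomputable def coreness {V : Type*} (G : SimpleGraph V) (u : V) : ℕ :=
  sSup {k : ℕ | ∃ C : Set V, u ∈ C ∧ ∀ w ∈ C, k ≤ degOn G C w}

section Coreness

variable {V : Type*} [Finite V] {G G' : SimpleGraph V} {C D S : Set V} {x : V} {k t : ℕ}

lemma degOn_le_degOn (h : ∀ y ∈ C, G.Adj x y → y ∈ D ∧ G'.Adj x y) :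
    degOn G C x ≤ degOn G' D x :=
  Set.ncard_le_ncard (fun y hy => h y hy.1 hy.2) (Set.toFinite _)

lemma bddAbove_corenessSet (G : SimpleGraph V) (x : V) :
    BddAbove {k : ℕ | ∃ C : Set V, x ∈ C ∧ ∀ y ∈ C, k ≤ degOn G C y} :=
  ⟨Nat.card V, fun _ ⟨_, hx, h⟩ => (h x hx).trans (Set.ncard_le_card _)⟩

lemma le_coreness (hx : x ∈ C) (h : ∀ y ∈ C, k ≤ degOn G C y) : k ≤ coreness G x :=
  le_csSup (bddAbove_corenessSet G x) ⟨C, hx, h⟩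

lemma exists_coreness_le_degOn (G : SimpleGraph V) (x : V) :
    ∃ C : Set V, x ∈ C ∧ ∀ y ∈ C, coreness G x ≤ degOn G C y :=
  Nat.sSup_mem (s := {k | ∃ C : Set V, x ∈ C ∧ ∀ y ∈ C, k ≤ degOn G C y})
    ⟨0, {x}, rfl, fun _ _ => Nat.zero_le _⟩ (bddAbove_corenessSet G x)

lemma coreness_mono (h : G ≤ G') (x : V) : coreness G x ≤ coreness G' x := by
  obtain ⟨C, hx, hC⟩ := exists_coreness_le_degOn G x
  exact le_coreness hx fun y hy =>
    (hC y hy).trans (degOn_le_degOn fun z hz hyz => ⟨hz, h hyz⟩)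

lemma le_degOn_core (hx : t ≤ coreness G x) : t ≤ degOn G {y | t ≤ coreness G y} x := by
  obtain ⟨C, hxC, hC⟩ := exists_coreness_le_degOn G x
  calc t ≤ coreness G x := hx
    _ ≤ degOn G C x := hC x hxC
    _ ≤ _ := degOn_le_degOn fun y hy hxy => ⟨hx.trans (le_coreness hy hC), hxy⟩

lemma le_coreness_of_le_degOn_union_core
    (hS : ∀ y ∈ S, t ≤ degOn G (S ∪ {z | t ≤ coreness G z}) y) (hx : x ∈ S) :
    t ≤ coreness G x := by
  refine le_coreness (Set.mem_union_left {z | t ≤ coreness G z} hx) fun y hy => ?_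
  rcases hy with hy | hy
  · exact hS y hy
  · exact (le_degOn_core hy).trans (degOn_le_degOn fun z hz hyz => ⟨Or.inr hz, hyz⟩)

end Coreness

section EdgeInsertion

variable {V : Type*} [Finite V] {G G' : SimpleGraph V} {u v : V}

lemma degOn_le_degOn_add_one
    (hG' : ∀ a b, G'.Adj a b ↔ G.Adj a b ∨ (a = u ∧ b = v) ∨ (a = v ∧ b = u))
    (C : Set V) (x : V) : degOn G' C x ≤ degOn G C x + 1 := by
  classical
  have hsub : {y ∈ C | G'.Adj x y} ⊆ insert (if x = u then v else u) {y ∈ C | G.Adj x y} := by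
    rintro y ⟨hy, hxy⟩
    rcases (hG' x y).1 hxy with hxy | ⟨rfl, rfl⟩ | ⟨rfl, rfl⟩
    · exact Or.inr ⟨hy, hxy⟩
    · simp
    · split_ifs with h <;> simp [h]
  exact (Set.ncard_le_ncard hsub (Set.toFinite _)).trans (Set.ncard_insert_le _ _)

lemma coreness_le_coreness_add_one
    (hG' : ∀ a b, G'.Adj a b ↔ G.Adj a b ∨ (a = u ∧ b = v) ∨ (a = v ∧ b = u))
    (x : V) : coreness G' x ≤ coreness G x + 1 := by
  obtain ⟨C, hx, hC⟩ := exists_coreness_le_degOn G' x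
  have : coreness G' x - 1 ≤ coreness G x := le_coreness hx fun y hy => by
    have := hC y hy
    have := degOn_le_degOn_add_one hG' C y
    omega
  omega

lemma degOn_eq_of_notMem {C : Set V} {x : V}
    (hG' : ∀ a b, G'.Adj a b ↔ G.Adj a b ∨ (a = u ∧ b = v) ∨ (a = v ∧ b = u))
    (hu : x = u → v ∉ C) (hv : x = v → u ∉ C) : degOn G' C x = degOn G C x := by
  refine le_antisymm (degOn_le_degOn fun y hy hxy => ⟨hy, ?_⟩)
    (degOn_le_degOn fun y hy hxy => ⟨hy, (hG' x y).2 (Or.inl hxy)⟩)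
  rcases (hG' x y).1 hxy with hxy | ⟨rfl, rfl⟩ | ⟨rfl, rfl⟩
  · exact hxy
  · exact absurd hy (hu rfl)
  · exact absurd hy (hv rfl)

lemma exists_walk_of_coreness_lt
    (hG' : ∀ a b, G'.Adj a b ↔ G.Adj a b ∨ (a = u ∧ b = v) ∨ (a = v ∧ b = u))
    (hk : coreness G u < coreness G v) {C : Set V} {m : ℕ} {w : V}
    (hC : ∀ x ∈ C, m ≤ degOn G' C x)
    (hwC : w ∈ C) (hwm : coreness G w < m) :
    ∃ q : G.Walk w u, ∀ y ∈ q.support, y ∈ C ∧ coreness G y < m := by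
  set S := {x | ∃ q : G.Walk w x, ∀ y ∈ q.support, y ∈ C ∧ coreness G y < m}
  by_contra huS
  have hCm : ∀ x ∈ C, m ≤ coreness G x + 1 := fun x hx =>
    (le_coreness hx hC).trans (coreness_le_coreness_add_one hG' x)
  refine (le_coreness_of_le_degOn_union_core (S := S) ?_ ⟨.nil, by simp [hwC, hwm]⟩).not_gt hwm
  rintro x ⟨q, hq⟩
  obtain ⟨hxC, hxm⟩ := hq x q.end_mem_support
  have hxu : x = u → v ∉ C := by rintro rfl; exact absurd ⟨q, hq⟩ huS
  have hxv : x = v → u ∉ C := by rintro rfl huC; have := hCm u huC; omega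
  calc m ≤ degOn G' C x := hC x hxC
    _ = degOn G C x := degOn_eq_of_notMem hG' hxu hxv
    _ ≤ _ := degOn_le_degOn fun y hy hxy => ⟨?_, hxy⟩
  by_cases hym : coreness G y < m
  · refine Or.inl ⟨q.concat hxy, fun z hz => ?_⟩
    rw [SimpleGraph.Walk.support_concat, List.mem_append, List.mem_singleton] at hz
    rcases hz with hz | rfl
    exacts [hq z hz, ⟨hy, hym⟩]
  · exact Or.inr (not_lt.1 hym)

end EdgeInsertion

theorem candidate_of_insert_lt_general {V : Type*} [Fintype V] (G G' : SimpleGraph V)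
    (u v : V)
    (hG' : ∀ a b, G'.Adj a b ↔ G.Adj a b ∨ (a = u ∧ b = v) ∨ (a = v ∧ b = u))
    (hk : coreness G u < coreness G v)
    (w : V) (hw : coreness G' w ≠ coreness G w) :
    ∃ p : G.Walk u w, p.IsPath ∧ ∀ x ∈ p.support, coreness G x = coreness G u := by
  classical
  have hwm : coreness G w < coreness G' w :=
    (coreness_mono (fun a b h => (hG' a b).2 (Or.inl h)) w).lt_of_ne hw.symm
  obtain ⟨C, hwC, hC⟩ := exists_coreness_le_degOn G' w
  obtain ⟨q, hq⟩ := exists_walk_of_coreness_lt hG' hk hC hwC hwm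
  have hqm : ∀ y ∈ q.support, coreness G y + 1 = coreness G' w := fun y hy => by
    have := (le_coreness (hq y hy).1 hC).trans (coreness_le_coreness_add_one hG' y)
    have := (hq y hy).2
    omega
  have hu := hqm u q.end_mem_support
  refine ⟨q.reverse.bypass, q.reverse.bypass_isPath, fun x hx => ?_⟩
  have := hqm x (by simpa using q.reverse.support_bypass_subset_support hx)
  omega

/-- If the edge `(u,v)` with `k_G(u) < k_G(v)` is inserted, then every vertex `w` whose
coreness changes is `k`-reachable from `u` in the original graph `G` with `k = k_G(u)`:
there is a path from `u` to `w` in `G` all of whose vertices have coreness `k_G(u)`. -/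
theorem candidate_of_insert_lt {V : Type*} [Fintype V] (G G' : SimpleGraph V)
    (u v : V) (huv : u ≠ v) (hna : ¬ G.Adj u v)
    (hG' : ∀ a b, G'.Adj a b ↔ G.Adj a b ∨ (a = u ∧ b = v) ∨ (a = v ∧ b = u))
    (hk : coreness G u < coreness G v)
    (w : V) (hw : coreness G' w ≠ coreness G w) :
    ∃ p : G.Walk u w, p.IsPath ∧ ∀ x ∈ p.support, coreness G x = coreness G u :=
  candidate_of_insert_lt_general G G' u v hG' hk w hw
end

section
/- Let G be a finite undirected simple graph, let (u,v) be an edge of G, and let G' = G − (u,v) be the graph obtained by deleting the edge (u,v). Every maximal clique C of G' that is not a maximal clique of G contains exactly one of the two vertices u and v. -/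
/-!
Deleting the edge `uv` turns a clique of `G` into a clique of `G - uv` unless it contains both `u`
and `v`. So a maximal clique `C` of `G - uv` cannot contain both ends, and if it contains neither,
then every one-vertex extension of `C` that is a clique of `G` is already a clique of `G - uv`;
hence `C` is maximal in `G` as well.
-/

/-- `C` is a maximal clique of `G`: `C` is a clique and no strict superset of `C`
is a clique of `G`. -/
def IsMaxClique {V : Type*} (G : SimpleGraph V) (C : Set V) : Prop :=
  G.IsClique C ∧ ∀ D : Set V, C ⊂ D → ¬ G.IsClique D

theorem isMaxClique_iff_maximal {V : Type*} {G : SimpleGraph V} {C : Set V} :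
    IsMaxClique G C ↔ Maximal G.IsClique C :=
  Set.maximal_iff_forall_ssuperset.symm

namespace SimpleGraph

variable {V : Type*} {G G' : SimpleGraph V} {u v : V} {C : Set V}

theorem eq_deleteEdges_edge_of_adj_iff
    (hG' : ∀ a b, G'.Adj a b ↔ G.Adj a b ∧ ¬((a = u ∧ b = v) ∨ (a = v ∧ b = u))) :
    G' = G.deleteEdges {s(u, v)} := by
  ext a b
  simp [hG']

theorem IsClique.deleteEdges_edge (hC : G.IsClique C) (h : u ∉ C ∨ v ∉ C) :
    (G.deleteEdges {s(u, v)}).IsClique C := by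
  intro a ha b hb hab
  refine (deleteEdges_adj ..).2 ⟨hC ha hb hab, ?_⟩
  rw [Set.mem_singleton_iff, Sym2.eq_iff]
  rintro (⟨rfl, rfl⟩ | ⟨rfl, rfl⟩) <;> tauto

theorem maximal_isClique_of_deleteEdges_edge (huv : u ≠ v) (hu : u ∉ C) (hv : v ∉ C)
    (hC : Maximal (G.deleteEdges {s(u, v)}).IsClique C) :
    Maximal G.IsClique C := by
  refine (Set.maximal_iff_forall_insert fun _ _ ht hst => ht.subset hst).2
    ⟨hC.prop.mono (deleteEdges_le _), fun x hx hxC => hx (hC.mem_of_prop_insert ?_)⟩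
  refine hxC.deleteEdges_edge ?_
  by_cases hxu : x = u
  · subst hxu
    exact Or.inr (by simp [huv.symm, hv])
  · exact Or.inl (by simp [Ne.symm hxu, hu])

end SimpleGraph

open SimpleGraph in
theorem new_maxClique_after_delete_general {V : Type*}
    (G G' : SimpleGraph V) (u v : V) (hAdj : G.Adj u v)
    (hG' : ∀ a b, G'.Adj a b ↔ G.Adj a b ∧ ¬((a = u ∧ b = v) ∨ (a = v ∧ b = u)))
    (C : Set V) (hC : IsMaxClique G' C) (hnot : ¬ IsMaxClique G C) :
    (u ∈ C ∧ v ∉ C) ∨ (v ∈ C ∧ u ∉ C) := by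
  obtain rfl := eq_deleteEdges_edge_of_adj_iff hG'
  rw [isMaxClique_iff_maximal] at hC hnot
  have not_both : ¬(u ∈ C ∧ v ∈ C) := fun ⟨hu, hv⟩ => by
    simpa using hC.prop hu hv hAdj.ne
  have not_neither : ¬(u ∉ C ∧ v ∉ C) := fun ⟨hu, hv⟩ =>
    hnot (maximal_isClique_of_deleteEdges_edge hAdj.ne hu hv hC)
  tauto

/-- After deleting the edge `(u,v)`, every maximal clique `C` of the new graph `G'`
that is not a maximal clique of `G` contains exactly one of the two vertices `u`, `v`. -/
theorem new_maxClique_after_delete {V : Type*} [Fintype V]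
    (G G' : SimpleGraph V) (u v : V) (hAdj : G.Adj u v)
    (hG' : ∀ a b, G'.Adj a b ↔ G.Adj a b ∧ ¬((a = u ∧ b = v) ∨ (a = v ∧ b = u)))
    (C : Set V) (hC : IsMaxClique G' C) (hnot : ¬ IsMaxClique G C) :
    (u ∈ C ∧ v ∉ C) ∨ (v ∈ C ∧ u ∉ C) :=
  new_maxClique_after_delete_general G G' u v hAdj hG' C hC hnot
end
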